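/- Let $1<p<2$ and let $\mathfrak{S}f(x)=\big(\sum_k\sup_{|y|\le 100d\cdot 2^{-k}}|\mathcal{L}_kf(x+y)|^2\big)^{1/2}$ be the Peetre maximal square function, where $\mathcal{L}_kf=\phi_k*f$, $\phi_k=2^{kd}\phi(2^k\cdot)$, and $\phi$ is a radial Schwartz function with $\widehat\phi$ supported in $\{1/5<|\xi|<5\}$. For $n\in\mathbb{Z}$ let $\Omega_n=\{x:\mathfrak{S}f(x)>2^n\}$, let $\mathcal{Q}_{-k}^n$ be the dyadic cubes $Q$ of sidelength $2^{-k}$ with $|Q\cap\Omega_n|\ge|Q|/2$ and $|Q\cap\Omega_{n+1}|<|Q|/2$, and for a Whitney cube $W$ of $\Omega_n^*$ set $a_{k,W,n}=\sum_{Q\in\mathcal{Q}_{-k}^n,\,Q\subset W}(\mathcal{L}_kf)\chi_Q$. Then $\sum_{W}\sum_k\|a_{k,W,n}\|_{L^2}^2\le 8\cdot 2^{2n}\,\mathrm{meas}(\Omega_n)$. -/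

import Mathlib

open MeasureTheory ENNReal
open scoped FourierTransform

open scoped Classical
noncomputable section

/-- `L_k f = φ_k * f` where `φ_k = 2^{kd} φ(2^k ·)`. -/
def Lk (d : ℕ) (φ f : EuclideanSpace ℝ (Fin d) → ℂ) (k : ℤ)
    (x : EuclideanSpace ℝ (Fin d)) : ℂ :=
  ∫ y, (((2 : ℝ) ^ (k * (d : ℤ)) : ℝ) : ℂ) * φ ((2 : ℝ) ^ k • (x - y)) * f y

/-- The Peetre-type maximal square function
`𝔖f(x) = (Σ_k sup_{|y| ≤ 100d·2^{-k}} |L_k f(x+y)|²)^{1/2}`. -/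
def peetreSq (d : ℕ) (φ f : EuclideanSpace ℝ (Fin d) → ℂ)
    (x : EuclideanSpace ℝ (Fin d)) : ℝ≥0∞ :=
  (∑' k : ℤ, ⨆ y ∈ Metric.closedBall (0 : EuclideanSpace ℝ (Fin d))
      (100 * d * (2 : ℝ) ^ (-k)), (‖Lk d φ f k (x + y)‖₊ : ℝ≥0∞) ^ 2) ^ (1 / 2 : ℝ)

/-- `Ω_n = {x : 𝔖f(x) > 2^n}`. -/
def OmegaSet (d : ℕ) (φ f : EuclideanSpace ℝ (Fin d) → ℂ) (n : ℤ) :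
    Set (EuclideanSpace ℝ (Fin d)) :=
  {x | (2 : ℝ≥0∞) ^ n < peetreSq d φ f x}

/-- The dyadic cube of sidelength `2^s` indexed by `m ∈ ℤ^d`. -/
def dyadicCube (d : ℕ) (s : ℤ) (m : Fin d → ℤ) : Set (EuclideanSpace ℝ (Fin d)) :=
  {x | ∀ i, (2 : ℝ) ^ s * m i ≤ x i ∧ x i < (2 : ℝ) ^ s * (m i + 1)}

/-- The 50-fold dilate (same center) of the dyadic cube `(s, m)`. -/
def dilate50 (d : ℕ) (s : ℤ) (m : Fin d → ℤ) : Set (EuclideanSpace ℝ (Fin d)) :=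
  {x | ∀ i, |x i - (2 : ℝ) ^ s * (m i + 1 / 2)| ≤ 25 * (2 : ℝ) ^ s}

/-- Membership of the dyadic cube of sidelength `2^{-k}` indexed by `m` in the
collection `𝒬_{-k}^n`: `|Q ∩ Ω_n| ≥ |Q|/2` and `|Q ∩ Ω_{n+1}| < |Q|/2`. -/
def memQcal (d : ℕ) (φ f : EuclideanSpace ℝ (Fin d) → ℂ) (n k : ℤ)
    (m : Fin d → ℤ) : Prop :=
  volume (dyadicCube d (-k) m) / 2 ≤ volume (dyadicCube d (-k) m ∩ OmegaSet d φ f n) ∧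
  volume (dyadicCube d (-k) m ∩ OmegaSet d φ f (n + 1)) < volume (dyadicCube d (-k) m) / 2

/-- `Ω_n^* = {x : Mχ_{Ω_n}(x) > 100^{-d}}`, with `M` the Hardy–Littlewood maximal
operator. -/
def OmegaStar (d : ℕ) (φ f : EuclideanSpace ℝ (Fin d) → ℂ) (n : ℤ) :
    Set (EuclideanSpace ℝ (Fin d)) :=
  {x | (100 : ℝ≥0∞) ^ (-(d : ℤ)) <
    ⨆ (r : ℝ) (_ : 0 < r),
      volume (OmegaSet d φ f n ∩ Metric.ball x r) / volume (Metric.ball x r)}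

/-- The Whitney cubes of `Ω_n^*`: dyadic cubes maximal with the property that their
50-fold dilate is contained in `Ω_n^*`. -/
def whitney (d : ℕ) (φ f : EuclideanSpace ℝ (Fin d) → ℂ) (n : ℤ) (s : ℤ)
    (m : Fin d → ℤ) : Prop :=
  dilate50 d s m ⊆ OmegaStar d φ f n ∧
  ∀ (s' : ℤ) (m' : Fin d → ℤ), dyadicCube d s m ⊂ dyadicCube d s' m' →
    ¬ dilate50 d s' m' ⊆ OmegaStar d φ f n

/-- The atom `a_{k,W,n} = Σ_{Q ∈ 𝒬_{-k}^n, Q ⊂ W} (L_k f)·χ_Q`, for `W` the dyadic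
cube `(s, m)`. -/
def atomA (d : ℕ) (φ f : EuclideanSpace ℝ (Fin d) → ℂ) (n k s : ℤ)
    (m : Fin d → ℤ) : EuclideanSpace ℝ (Fin d) → ℂ :=
  Set.indicator
    {x | ∃ m' : Fin d → ℤ, memQcal d φ f n k m' ∧
      dyadicCube d (-k) m' ⊆ dyadicCube d s m ∧ x ∈ dyadicCube d (-k) m'}
    (Lk d φ f k)

/-!
At a fixed scale `k` the atoms live on pairwise disjoint Whitney cubes, so pointwise the left-hand
side is at most `∑_k 1_{V_k} |L_k f|²`, where `V_k = qcalUnion d φ f n k` is the union of the cubes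
of `𝒬_{-k}^n`. The cubes of the various `𝒬_{-k}^n` containing a point `x` are nested; among finitely
many of them the smallest one contains a point `z ∉ Ω_{n+1}`, and `‖x - z‖ ≤ d 2^{-k}` at every
scale `k` involved. Hence `∑_k 1_{V_k}(x) |L_k f(x)|² ≤ 𝔖f(z)² ≤ 4·2^{2n}` for every `x`. Finally
`⋃_k V_k` is covered by its maximal dyadic cubes, which are disjoint and at least half inside `Ω_n`,
so `|⋃_k V_k| ≤ 2 |Ω_n|`.
-/

open Set Function

section DyadicCube

variable {d : ℕ}

theorem mem_dyadicCube_iff {s : ℤ} {m : Fin d → ℤ} {x : EuclideanSpace ℝ (Fin d)} :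
    x ∈ dyadicCube d s m ↔ ∀ i, ⌊x i / 2 ^ s⌋ = m i := by
  have h2 : (0 : ℝ) < 2 ^ s := by positivity
  simp only [dyadicCube, mem_ofPred_eq, Int.floor_eq_iff, le_div_iff₀ h2, div_lt_iff₀ h2,
    mul_comm]

theorem floor_div_two_zpow_add (r : ℝ) (s : ℤ) (N : ℕ) :
    ⌊r / 2 ^ (s + N)⌋ = ⌊r / 2 ^ s⌋ / 2 ^ N := by
  rw [zpow_add₀ two_ne_zero, zpow_natCast, ← div_div,
    show (2 : ℝ) ^ N = ((2 ^ N : ℕ) : ℝ) by norm_cast, Int.floor_div_natCast]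
  norm_cast

theorem eq_of_mem_dyadicCube {s : ℤ} {m m' : Fin d → ℤ} {x : EuclideanSpace ℝ (Fin d)}
    (h : x ∈ dyadicCube d s m) (h' : x ∈ dyadicCube d s m') : m = m' := by
  rw [mem_dyadicCube_iff] at h h'
  exact funext fun i => (h i).symm.trans (h' i)

theorem dyadicCube_subset_of_mem {s s' : ℤ} (hs : s ≤ s') {m m' : Fin d → ℤ}
    {x : EuclideanSpace ℝ (Fin d)} (h : x ∈ dyadicCube d s m) (h' : x ∈ dyadicCube d s' m') :
    dyadicCube d s m ⊆ dyadicCube d s' m' := by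
  obtain ⟨N, rfl⟩ := Int.le.dest hs
  intro y hy
  rw [mem_dyadicCube_iff] at h h' hy ⊢
  intro i
  rw [← h' i, floor_div_two_zpow_add, floor_div_two_zpow_add, hy i, h i]

theorem dyadicCube_eq_preimage (s : ℤ) (m : Fin d → ℤ) :
    dyadicCube d s m = (MeasurableEquiv.toLp 2 (Fin d → ℝ)).symm ⁻¹'
      univ.pi fun i => Ico (2 ^ s * m i) (2 ^ s * (m i + 1)) := by
  ext x
  simp [dyadicCube, MeasurableEquiv.coe_toLp_symm]

theorem measurableSet_dyadicCube (s : ℤ) (m : Fin d → ℤ) :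
    MeasurableSet (dyadicCube d s m) := by
  rw [dyadicCube_eq_preimage]
  exact MeasurableEquiv.measurable _ (MeasurableSet.univ_pi fun _ => measurableSet_Ico)

theorem volume_dyadicCube (s : ℤ) (m : Fin d → ℤ) :
    volume (dyadicCube d s m) = ENNReal.ofReal (2 ^ s) ^ d := by
  rw [dyadicCube_eq_preimage,
    (EuclideanSpace.volume_preserving_symm_measurableEquiv_toLp (Fin d)).measure_preimage
      (MeasurableSet.univ_pi fun _ => measurableSet_Ico).nullMeasurableSet, volume_pi_pi]
  simp [Real.volume_Ico, mul_add]

theorem dyadicCube_injective (hd : 1 ≤ d) {s s' : ℤ} {m m' : Fin d → ℤ}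
    (h : dyadicCube d s m = dyadicCube d s' m') : s = s' ∧ m = m' := by
  have hvol := congrArg volume h
  rw [volume_dyadicCube, volume_dyadicCube] at hvol
  have hpow : ENNReal.ofReal (2 ^ s) = ENNReal.ofReal (2 ^ s') :=
    le_antisymm ((ENNReal.pow_le_pow_left_iff (by omega)).1 hvol.le)
      ((ENNReal.pow_le_pow_left_iff (by omega)).1 hvol.ge)
  rw [ENNReal.ofReal_eq_ofReal_iff (by positivity) (by positivity),
    (zpow_right_strictMono₀ (one_lt_two (α := ℝ))).injective.eq_iff] at hpow
  subst hpow
  obtain ⟨x, hx⟩ : (dyadicCube d s m).Nonempty :=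
    nonempty_of_measure_ne_zero (μ := volume) (by rw [volume_dyadicCube]; positivity)
  exact ⟨rfl, eq_of_mem_dyadicCube hx (h ▸ hx)⟩

theorem norm_sub_le_of_mem_dyadicCube {s : ℤ} {m : Fin d → ℤ}
    {x z : EuclideanSpace ℝ (Fin d)} (hx : x ∈ dyadicCube d s m) (hz : z ∈ dyadicCube d s m) :
    ‖x - z‖ ≤ d * 2 ^ s := by
  have hcoord : ∀ i, ‖(x - z) i‖ ^ 2 ≤ (2 ^ s) ^ 2 := fun i => by
    obtain ⟨hx₁, hx₂⟩ := hx i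
    obtain ⟨hz₁, hz₂⟩ := hz i
    rw [PiLp.sub_apply, Real.norm_eq_abs, sq_abs]
    apply sq_le_sq' <;> linarith
  refine le_of_pow_le_pow_left₀ two_ne_zero (by positivity) ?_
  calc ‖x - z‖ ^ 2 = ∑ i, ‖(x - z) i‖ ^ 2 := EuclideanSpace.norm_sq_eq _
    _ ≤ ∑ _i : Fin d, (2 ^ s : ℝ) ^ 2 := Finset.sum_le_sum fun i _ => hcoord i
    _ ≤ (d * 2 ^ s) ^ 2 := by
      have : (d : ℝ) ≤ d ^ 2 := by exact_mod_cast Nat.le_self_pow two_ne_zero d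
      simp only [Finset.sum_const, Finset.card_univ, Fintype.card_fin, nsmul_eq_mul, mul_pow]
      gcongr

end DyadicCube

theorem measure_iUnion_le_mul_of_le_mul_inter {α ι : Type*} [MeasurableSpace α] {μ : Measure α}
    [Countable ι] {s : ι → Set α} (hdisj : Pairwise (Disjoint on s))
    (hs : ∀ i, MeasurableSet (s i)) {c : ℝ≥0∞} {E : Set α}
    (h : ∀ i, μ (s i) ≤ c * μ (s i ∩ E)) : μ (⋃ i, s i) ≤ c * μ E :=
  calc μ (⋃ i, s i) ≤ ∑' i, μ (s i) := measure_iUnion_le _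
    _ ≤ ∑' i, c * μ (s i ∩ E) := ENNReal.tsum_le_tsum h
    _ = c * μ.restrict (⋃ i, s i) E := by
      simp_rw [ENNReal.tsum_mul_left, Measure.restrict_iUnion hdisj hs,
        Measure.sum_apply_of_countable, Measure.restrict_apply' (hs _), inter_comm]
    _ ≤ c * μ E := by gcongr c * ?_; exact Measure.restrict_apply_le _ _

section DyadicCovering

variable {d : ℕ} {P : ℤ → (Fin d → ℤ) → Prop} {E : Set (EuclideanSpace ℝ (Fin d))}

theorem volume_iUnion_dyadicCube_le_of_forall_le {K : ℤ} (hK : ∀ k m, P k m → K ≤ k)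
    (hP : ∀ k m, P k m → volume (dyadicCube d (-k) m) / 2 ≤ volume (dyadicCube d (-k) m ∩ E)) :
    volume (⋃ (k) (m) (_ : P k m), dyadicCube d (-k) m) ≤ 2 * volume E := by
  let cube : ℤ × (Fin d → ℤ) → Set (EuclideanSpace ℝ (Fin d)) := fun p => dyadicCube d (-p.1) p.2
  -- the maximal cubes of the family; they exist because the sidelengths are bounded
  let M := {p | P p.1 p.2 ∧ ∀ q : ℤ × (Fin d → ℤ), P q.1 q.2 → cube p ⊆ cube q → p.1 ≤ q.1}
  have hcover : (⋃ (k) (m) (_ : P k m), dyadicCube d (-k) m) ⊆ ⋃ p : M, cube p := by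
    simp only [iUnion_subset_iff]
    intro k m hkm x hx
    obtain ⟨k₀, ⟨m₀, hm₀, hx₀⟩, hleast⟩ := Int.exists_least_of_bdd
      (P := fun j => ∃ m', P j m' ∧ x ∈ dyadicCube d (-j) m')
      ⟨K, fun j ⟨m', h, _⟩ => hK j m' h⟩ ⟨k, m, hkm, hx⟩
    exact mem_iUnion.2 ⟨⟨(k₀, m₀), hm₀, fun q hq hsub => hleast q.1 ⟨q.2, hq, hsub hx₀⟩⟩, hx₀⟩
  have hdisj : Pairwise (Disjoint on fun p : M => cube p) := by
    have key : ∀ p q : M, (-p.1.1 : ℤ) ≤ -q.1.1 → ¬Disjoint (cube p) (cube q) → p = q := by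
      rintro ⟨⟨k, m⟩, hp, hmax⟩ ⟨⟨k', m'⟩, hq, _⟩ hle hmeet
      obtain ⟨x, hx, hx'⟩ := not_disjoint_iff.1 hmeet
      have hk : k = k' := le_antisymm (hmax (k', m') hq (dyadicCube_subset_of_mem hle hx hx'))
        (by simpa using hle)
      subst hk
      obtain rfl : m = m' := eq_of_mem_dyadicCube (s := -k) hx hx'
      rfl
    intro p q hpq
    by_contra hmeet
    rcases le_total (-p.1.1) (-q.1.1) with hle | hle
    · exact hpq (key p q hle hmeet)
    · exact hpq (key q p hle (fun h => hmeet h.symm)).symm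
  refine (measure_mono hcover).trans (measure_iUnion_le_mul_of_le_mul_inter hdisj
    (fun p => measurableSet_dyadicCube _ _) fun p => ?_)
  rw [← ENNReal.mul_div_cancel two_ne_zero ENNReal.ofNat_ne_top (b := volume (cube p))]
  gcongr
  exact hP _ _ p.2.1

theorem volume_iUnion_dyadicCube_le
    (hP : ∀ k m, P k m → volume (dyadicCube d (-k) m) / 2 ≤ volume (dyadicCube d (-k) m ∩ E)) :
    volume (⋃ (k) (m) (_ : P k m), dyadicCube d (-k) m) ≤ 2 * volume E := by
  let truncation : ℕ → Set (EuclideanSpace ℝ (Fin d)) := fun K =>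
    ⋃ (k) (m) (_ : P k m ∧ -(K : ℤ) ≤ k), dyadicCube d (-k) m
  have hunion : (⋃ (k) (m) (_ : P k m), dyadicCube d (-k) m) = ⋃ K, truncation K := by
    ext x
    simp only [truncation, mem_iUnion, exists_prop]
    exact ⟨fun ⟨k, m, h, hx⟩ => ⟨(-k).toNat, k, m, ⟨h, by omega⟩, hx⟩,
      fun ⟨_, k, m, h, hx⟩ => ⟨k, m, h.1, hx⟩⟩
  have hmono : Monotone truncation := fun K K' hKK' =>
    iUnion₂_mono fun k m => iUnion_subset fun h =>
      subset_iUnion_of_subset ⟨h.1, le_trans (by omega) h.2⟩ subset_rfl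
  rw [hunion, hmono.measure_iUnion]
  exact iSup_le fun K =>
    volume_iUnion_dyadicCube_le_of_forall_le (fun _ _ h => h.2) fun k m h => hP k m h.1

end DyadicCovering

theorem ENNReal.tsum_le_of_support_subsingleton {α : Type*} {g : α → ℝ≥0∞} {c : ℝ≥0∞}
    (hg : (support g).Subsingleton) (hc : ∀ a, g a ≤ c) : ∑' a, g a ≤ c := by
  rcases hg.eq_empty_or_singleton with hempty | ⟨a, ha⟩
  · simp [support_eq_empty_iff.1 hempty]
  · rw [tsum_eq_single a fun b hb => notMem_support.1 fun hb' => hb (by simpa [ha] using hb')]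
    exact hc a

theorem tsum_lintegral_le_lintegral_tsum {α ι : Type*} [MeasurableSpace α] {μ : Measure α}
    (g : ι → α → ℝ≥0∞) : ∑' i, ∫⁻ x, g i x ∂μ ≤ ∫⁻ x, ∑' i, g i x ∂μ := by
  rw [ENNReal.tsum_eq_iSup_sum]
  refine iSup_le fun t => ?_
  calc ∑ i ∈ t, ∫⁻ x, g i x ∂μ ≤ ∫⁻ x, ∑ i ∈ t, g i x ∂μ := by
        classical
        induction t using Finset.induction_on with
        | empty => simp
        | insert i t hi ih =>
          simp only [Finset.sum_insert hi]
          exact (add_le_add le_rfl ih).trans (le_lintegral_add _ _)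
    _ ≤ ∫⁻ x, ∑' i, g i x ∂μ := lintegral_mono fun x => ENNReal.sum_le_tsum t

section LevelSets

variable {d : ℕ} {φ f : EuclideanSpace ℝ (Fin d) → ℂ} {n : ℤ}

def peetreTerm (d : ℕ) (φ f : EuclideanSpace ℝ (Fin d) → ℂ) (k : ℤ)
    (z : EuclideanSpace ℝ (Fin d)) : ℝ≥0∞ :=
  ⨆ y ∈ Metric.closedBall (0 : EuclideanSpace ℝ (Fin d)) (100 * d * (2 : ℝ) ^ (-k)),
    (‖Lk d φ f k (z + y)‖₊ : ℝ≥0∞) ^ 2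

theorem sq_nnnorm_Lk_le_peetreTerm {k : ℤ} {x z : EuclideanSpace ℝ (Fin d)}
    (h : ‖x - z‖ ≤ 100 * d * (2 : ℝ) ^ (-k)) :
    (‖Lk d φ f k x‖₊ : ℝ≥0∞) ^ 2 ≤ peetreTerm d φ f k z := by
  have hmem : x - z ∈ Metric.closedBall 0 (100 * d * (2 : ℝ) ^ (-k)) := by
    rwa [mem_closedBall_zero_iff]
  have h := le_biSup (fun y => (‖Lk d φ f k (z + y)‖₊ : ℝ≥0∞) ^ 2) hmem
  rwa [add_sub_cancel] at h

theorem tsum_peetreTerm_le_of_notMem_omegaSet {z : EuclideanSpace ℝ (Fin d)}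
    (hz : z ∉ OmegaSet d φ f n) : ∑' k, peetreTerm d φ f k z ≤ ((2 : ℝ≥0∞) ^ n) ^ 2 := by
  have hz : peetreSq d φ f z ≤ 2 ^ n := not_lt.1 hz
  rwa [peetreSq, one_div, ENNReal.rpow_inv_le_iff two_pos, ENNReal.rpow_two] at hz

theorem exists_notMem_omegaSet_of_memQcal {k : ℤ} {m : Fin d → ℤ} (hm : memQcal d φ f n k m) :
    ∃ z ∈ dyadicCube d (-k) m, z ∉ OmegaSet d φ f (n + 1) := by
  by_contra! hsub
  have h := hm.2
  rw [inter_eq_left.2 hsub] at h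
  exact (h.trans_le ENNReal.half_le_self).false

def qcalUnion (d : ℕ) (φ f : EuclideanSpace ℝ (Fin d) → ℂ) (n k : ℤ) :
    Set (EuclideanSpace ℝ (Fin d)) :=
  ⋃ (m) (_ : memQcal d φ f n k m), dyadicCube d (-k) m

theorem tsum_indicator_qcalUnion_le (x : EuclideanSpace ℝ (Fin d)) :
    ∑' k, (qcalUnion d φ f n k).indicator (fun y => (‖Lk d φ f k y‖₊ : ℝ≥0∞) ^ 2) x ≤
      (⋃ k, qcalUnion d φ f n k).indicator (fun _ => ((2 : ℝ≥0∞) ^ (n + 1)) ^ 2) x := by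
  by_cases hx : x ∈ ⋃ k, qcalUnion d φ f n k
  swap
  · simp [indicator_of_notMem fun h => hx (mem_iUnion_of_mem _ h)]
  rw [indicator_of_mem hx, ENNReal.tsum_eq_iSup_sum]
  refine iSup_le fun t => ?_
  classical
  simp only [indicator_apply]
  rw [← Finset.sum_filter]
  set t' := t.filter (x ∈ qcalUnion d φ f n ·)
  rcases t'.eq_empty_or_nonempty with hempty | hne
  · simp [hempty]
  obtain ⟨m₀, hm₀, hx₀⟩ := mem_iUnion₂.1 (Finset.mem_filter.1 (t'.max'_mem hne)).2
  obtain ⟨z, hz, hzΩ⟩ := exists_notMem_omegaSet_of_memQcal hm₀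
  calc ∑ k ∈ t', (‖Lk d φ f k x‖₊ : ℝ≥0∞) ^ 2 ≤ ∑ k ∈ t', peetreTerm d φ f k z :=
        Finset.sum_le_sum fun k hk => by
          obtain ⟨m, -, hxm⟩ := mem_iUnion₂.1 (Finset.mem_filter.1 hk).2
          have hsub := dyadicCube_subset_of_mem (neg_le_neg (t'.le_max' k hk)) hx₀ hxm
          apply sq_nnnorm_Lk_le_peetreTerm
          have := norm_sub_le_of_mem_dyadicCube hxm (hsub hz)
          have : (0 : ℝ) ≤ d * 2 ^ (-k) := by positivity
          linarith
    _ ≤ ∑' k, peetreTerm d φ f k z := ENNReal.sum_le_tsum _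
    _ ≤ _ := tsum_peetreTerm_le_of_notMem_omegaSet hzΩ

end LevelSets

section Whitney

variable {d : ℕ} {φ f : EuclideanSpace ℝ (Fin d) → ℂ} {n : ℤ}

theorem whitney_unique (hd : 1 ≤ d) {s s' : ℤ} {m m' : Fin d → ℤ}
    (h : whitney d φ f n s m) (h' : whitney d φ f n s' m') {x : EuclideanSpace ℝ (Fin d)}
    (hx : x ∈ dyadicCube d s m) (hx' : x ∈ dyadicCube d s' m') : s = s' ∧ m = m' := by
  wlog hle : s ≤ s' generalizing s s' m m'
  · obtain ⟨hs, hm⟩ := this h' h hx' hx (le_of_not_ge hle)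
    exact ⟨hs.symm, hm.symm⟩
  have hsub := dyadicCube_subset_of_mem hle hx hx'
  refine dyadicCube_injective hd (by_contra fun hne => ?_)
  exact h.2 s' m' (hsub.ssubset_of_ne hne) h'.1

theorem mem_dyadicCube_of_atomA_ne_zero {k s : ℤ} {m : Fin d → ℤ} {x : EuclideanSpace ℝ (Fin d)}
    (hx : atomA d φ f n k s m x ≠ 0) : x ∈ dyadicCube d s m := by
  obtain ⟨m', -, hsub, hxm'⟩ := mem_of_indicator_ne_zero hx
  exact hsub hxm'

theorem sq_nnnorm_atomA_le_indicator (k s : ℤ) (m : Fin d → ℤ) (x : EuclideanSpace ℝ (Fin d)) :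
    (‖atomA d φ f n k s m x‖₊ : ℝ≥0∞) ^ 2 ≤
      (qcalUnion d φ f n k).indicator (fun y => (‖Lk d φ f k y‖₊ : ℝ≥0∞) ^ 2) x := by
  by_cases hx : atomA d φ f n k s m x = 0
  · simp [hx]
  obtain ⟨m', hm', -, hxm'⟩ := mem_of_indicator_ne_zero hx
  rw [indicator_of_mem (show x ∈ qcalUnion d φ f n k from mem_iUnion₂.2 ⟨m', hm', hxm'⟩), atomA,
    indicator_of_mem (mem_of_indicator_ne_zero hx)]

theorem tsum_whitney_sq_nnnorm_atomA_le (hd : 1 ≤ d) (k : ℤ) (x : EuclideanSpace ℝ (Fin d)) :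
    ∑' (s) (m), (if whitney d φ f n s m then (‖atomA d φ f n k s m x‖₊ : ℝ≥0∞) ^ 2 else 0) ≤
      (qcalUnion d φ f n k).indicator (fun y => (‖Lk d φ f k y‖₊ : ℝ≥0∞) ^ 2) x := by
  rw [← ENNReal.tsum_prod]
  refine ENNReal.tsum_le_of_support_subsingleton ?_ fun p => ?_
  · have hmem : ∀ {p : ℤ × (Fin d → ℤ)}, p ∈ support (fun p : ℤ × (Fin d → ℤ) =>
        if whitney d φ f n p.1 p.2 then (‖atomA d φ f n k p.1 p.2 x‖₊ : ℝ≥0∞) ^ 2 else 0) →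
        whitney d φ f n p.1 p.2 ∧ x ∈ dyadicCube d p.1 p.2 := fun {p} hp => by
      simp only [mem_support, ne_eq, ite_eq_right_iff, not_forall, pow_eq_zero_iff two_ne_zero,
        ENNReal.coe_eq_zero, nnnorm_eq_zero] at hp
      obtain ⟨hw, hx⟩ := hp
      exact ⟨hw, mem_dyadicCube_of_atomA_ne_zero hx⟩
    intro p hp q hq
    obtain ⟨hw, hx⟩ := hmem hp
    obtain ⟨hw', hx'⟩ := hmem hq
    exact Prod.ext_iff.2 (whitney_unique hd hw hw' hx hx')
  · split_ifs
    · exact sq_nnnorm_atomA_le_indicator k p.1 p.2 x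
    · exact zero_le

theorem tsum_whitney_sq_nnnorm_atomA_le_indicator (hd : 1 ≤ d) (x : EuclideanSpace ℝ (Fin d)) :
    ∑' (s) (m) (k), (if whitney d φ f n s m then (‖atomA d φ f n k s m x‖₊ : ℝ≥0∞) ^ 2 else 0) ≤
      (⋃ k, qcalUnion d φ f n k).indicator (fun _ => ((2 : ℝ≥0∞) ^ (n + 1)) ^ 2) x :=
  calc _ = ∑' (k) (s) (m),
        (if whitney d φ f n s m then (‖atomA d φ f n k s m x‖₊ : ℝ≥0∞) ^ 2 else 0) :=
        (tsum_congr fun _ => ENNReal.tsum_comm).trans ENNReal.tsum_comm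
    _ ≤ ∑' k, (qcalUnion d φ f n k).indicator (fun y => (‖Lk d φ f k y‖₊ : ℝ≥0∞) ^ 2) x :=
        ENNReal.tsum_le_tsum fun k => tsum_whitney_sq_nnnorm_atomA_le hd k x
    _ ≤ _ := tsum_indicator_qcalUnion_le x

end Whitney

theorem statement15_general (d : ℕ) (hd : 1 ≤ d)
    (φ : SchwartzMap (EuclideanSpace ℝ (Fin d)) ℂ)
    (f : EuclideanSpace ℝ (Fin d) → ℂ) (n : ℤ) :
    (∑' (s : ℤ) (m : Fin d → ℤ),
        if whitney d (⇑φ) f n s m then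
          ∑' k : ℤ, ∫⁻ x, (‖atomA d (⇑φ) f n k s m x‖₊ : ℝ≥0∞) ^ 2
        else 0) ≤
      8 * (2 : ℝ≥0∞) ^ (2 * n) * volume (OmegaSet d (⇑φ) f n) := by
  have hconst : ((2 : ℝ≥0∞) ^ (n + 1)) ^ 2 * 2 = 8 * 2 ^ (2 * n) := by
    rw [pow_two, ← ENNReal.zpow_add two_ne_zero ENNReal.ofNat_ne_top,
      show n + 1 + (n + 1) = 2 * n + 2 by ring, ENNReal.zpow_add two_ne_zero ENNReal.ofNat_ne_top]
    norm_num
    ring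
  calc _ = ∑' (s) (m) (k), ∫⁻ x,
        (if whitney d φ f n s m then (‖atomA d φ f n k s m x‖₊ : ℝ≥0∞) ^ 2 else 0) :=
        tsum_congr fun s => tsum_congr fun m => by split_ifs <;> simp
    _ ≤ ∫⁻ x, ∑' (s) (m) (k),
        (if whitney d φ f n s m then (‖atomA d φ f n k s m x‖₊ : ℝ≥0∞) ^ 2 else 0) :=
        (ENNReal.tsum_le_tsum fun s => (ENNReal.tsum_le_tsum fun m =>
          tsum_lintegral_le_lintegral_tsum _).trans (tsum_lintegral_le_lintegral_tsum _)).trans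
          (tsum_lintegral_le_lintegral_tsum _)
    _ ≤ ∫⁻ x, (⋃ k, qcalUnion d φ f n k).indicator (fun _ => ((2 : ℝ≥0∞) ^ (n + 1)) ^ 2) x :=
        lintegral_mono fun x => tsum_whitney_sq_nnnorm_atomA_le_indicator hd x
    _ ≤ ((2 : ℝ≥0∞) ^ (n + 1)) ^ 2 * volume (⋃ k, qcalUnion d φ f n k) :=
        lintegral_indicator_const_le _ _
    _ ≤ ((2 : ℝ≥0∞) ^ (n + 1)) ^ 2 * (2 * volume (OmegaSet d φ f n)) := by
        gcongr
        exact volume_iUnion_dyadicCube_le fun k m hm => hm.1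
    _ = 8 * 2 ^ (2 * n) * volume (OmegaSet d φ f n) := by rw [← mul_assoc, hconst]

/-- The basic `L²` estimate for the Chang–Fefferman atomic decomposition:
`Σ_{W ∈ 𝒲_n} Σ_k ‖a_{k,W,n}‖₂² ≤ 8·2^{2n}·meas(Ω_n)`. -/
theorem statement15 (d : ℕ) (hd : 1 ≤ d) (p : ℝ) (hp1 : 1 < p) (hp2 : p < 2)
    (φ : SchwartzMap (EuclideanSpace ℝ (Fin d)) ℂ)
    (hrad : ∀ x y : EuclideanSpace ℝ (Fin d), ‖x‖ = ‖y‖ → φ x = φ y)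
    (hsupp : Function.support (𝓕 ⇑φ) ⊆
      {ξ : EuclideanSpace ℝ (Fin d) | 1 / 5 < ‖ξ‖ ∧ ‖ξ‖ < 5})
    (f : EuclideanSpace ℝ (Fin d) → ℂ) (hf : Measurable f)
    (hfp : MemLp f (ENNReal.ofReal p)) (n : ℤ) :
    (∑' (s : ℤ) (m : Fin d → ℤ),
        if whitney d (⇑φ) f n s m then
          ∑' k : ℤ, ∫⁻ x, (‖atomA d (⇑φ) f n k s m x‖₊ : ℝ≥0∞) ^ 2
        else 0) ≤
      8 * (2 : ℝ≥0∞) ^ (2 * n) * volume (OmegaSet d (⇑φ) f n) :=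
  statement15_general d hd φ f n

end
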